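/- arXiv:1105.2669 — 8 statements merged into one kernel-verified Lean document; each statement's English description precedes it below -/
import Mathlib

section
/- For positive integers 1 ≤ d < k < n and s ≤ d, the matrix M(d,k,n) (rows indexed by d-subsets, columns by k-subsets of [n], entry 1 iff A ⊆ B) is s^{e₁}-disjunct with e₁ = C(k-s, d-s) - 1: for any s+1 distinct k-subsets B₀, B₁, ..., B_s of [n], there are at least C(k-s, d-s) d-subsets D of [n] with D ⊆ B₀ and D ⊄ B_j for all j = 1,...,s. -/
lemma choose_sub_mono (k d : ℕ) (hdk : d ≤ k) :
    ∀ s t, t ≤ s → s ≤ d → (k - s).choose (d - s) ≤ (k - t).choose (d - t) := by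
  intro s
  induction s with
  | zero =>
    intro t ht _
    interval_cases t
    exact le_rfl
  | succ m ih =>
    intro t ht hsd
    rcases Nat.lt_or_ge t (m + 1) with h | h
    · have step : (k - (m + 1)).choose (d - (m + 1)) ≤ (k - m).choose (d - m) := by
        have h1 : k - m = (k - (m + 1)) + 1 := by omega
        have h2 : d - m = (d - (m + 1)) + 1 := by omega
        rw [h1, h2, Nat.choose_succ_succ]
        exact Nat.le_add_right _ _
      exact le_trans step (ih t (by omega) (by omega))
    · have : t = m + 1 := by omega
      subst this
      exact le_rfl

theorem macula_disjunct (n d k s : ℕ) (hd : 1 ≤ d) (hdk : d < k) (hkn : k < n)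
    (hs : s ≤ d) (B : Fin (s + 1) → Finset (Fin n)) (hB : ∀ j, (B j).card = k)
    (hinj : Function.Injective B) :
    Nat.choose (k - s) (d - s) ≤
      (Finset.univ.filter (fun D : Finset (Fin n) =>
        D.card = d ∧ D ⊆ B 0 ∧ ∀ j ≠ 0, ¬ D ⊆ B j)).card := by
  classical
  have hn : 0 < n := by omega
  have hBne : ∀ j : Fin (s + 1), j ≠ 0 → (B 0 \ B j).Nonempty := by
    intro j hj
    rw [Finset.sdiff_nonempty]
    intro hsub
    have heq : B 0 = B j := Finset.eq_of_subset_of_card_le hsub (by rw [hB j, hB 0])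
    exact hj (hinj heq).symm
  set x : Fin (s + 1) → Fin n :=
    fun j => if h : (B 0 \ B j).Nonempty then h.choose else ⟨0, hn⟩ with hx
  have hxmem : ∀ j : Fin (s + 1), j ≠ 0 → x j ∈ B 0 \ B j := by
    intro j hj
    have h := hBne j hj
    simp only [hx, dif_pos h]
    exact h.choose_spec
  set S : Finset (Fin n) := ((Finset.univ : Finset (Fin (s + 1))).erase 0).image x with hS
  have hScard : S.card ≤ s := by
    calc S.card ≤ ((Finset.univ : Finset (Fin (s + 1))).erase 0).card :=
          Finset.card_image_le
      _ = s := by simp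
  have hSsub : S ⊆ B 0 := by
    intro a ha
    rw [hS, Finset.mem_image] at ha
    obtain ⟨j, hj, rfl⟩ := ha
    have hj0 : j ≠ 0 := (Finset.mem_erase.mp hj).1
    exact (Finset.mem_sdiff.mp (hxmem j hj0)).1
  set s' := S.card with hs'
  have hs'd : s' ≤ d := le_trans hScard hs
  set P := Finset.powersetCard (d - s') (B 0 \ S) with hP
  have hBScard : (B 0 \ S).card = k - s' := by
    rw [Finset.card_sdiff_of_subset hSsub, hB 0]
  have hPcard : P.card = (k - s').choose (d - s') := by
    rw [hP, Finset.card_powersetCard, hBScard]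
  have himg : P.image (· ∪ S) ⊆ (Finset.univ.filter (fun D : Finset (Fin n) =>
      D.card = d ∧ D ⊆ B 0 ∧ ∀ j ≠ 0, ¬ D ⊆ B j)) := by
    intro E hE
    rw [Finset.mem_image] at hE
    obtain ⟨D, hD, rfl⟩ := hE
    rw [hP, Finset.mem_powersetCard] at hD
    obtain ⟨hDsub, hDcard⟩ := hD
    have hdisj : Disjoint D S := Finset.disjoint_of_subset_left hDsub Finset.sdiff_disjoint
    rw [Finset.mem_filter]
    refine ⟨Finset.mem_univ _, ?_, ?_, ?_⟩
    · rw [Finset.card_union_of_disjoint hdisj, hDcard]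
      omega
    · exact Finset.union_subset (hDsub.trans Finset.sdiff_subset) hSsub
    · intro j hj hcon
      have hxS : x j ∈ S := by
        rw [hS, Finset.mem_image]
        exact ⟨j, Finset.mem_erase.mpr ⟨hj, Finset.mem_univ _⟩, rfl⟩
      have hin : x j ∈ B j := hcon (Finset.mem_union_right _ hxS)
      exact (Finset.mem_sdiff.mp (hxmem j hj)).2 hin
  have hinjon : Set.InjOn (· ∪ S) P := by
    intro a ha b hb hab
    rw [Finset.mem_coe, Finset.mem_powersetCard] at ha hb
    have hda : Disjoint a S := Finset.disjoint_of_subset_left ha.1 Finset.sdiff_disjoint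
    have hdb : Disjoint b S := Finset.disjoint_of_subset_left hb.1 Finset.sdiff_disjoint
    simp only at hab
    have : (a ∪ S) \ S = (b ∪ S) \ S := by rw [hab]
    rwa [Finset.union_sdiff_cancel_right hda, Finset.union_sdiff_cancel_right hdb] at this
  calc (k - s).choose (d - s) ≤ (k - s').choose (d - s') :=
        choose_sub_mono k d (le_of_lt hdk) s s' hScard hs
    _ = P.card := hPcard.symm
    _ = (P.image (· ∪ S)).card := (Finset.card_image_of_injOn hinjon).symm
    _ ≤ _ := Finset.card_le_card himg
end

section
/- Let 1 ≤ d < k < n and s ≤ d. The matrix M(d,k,n) is not s^{e}-disjunct for any e ≥ C(k-s, d-s): there exist s+1 distinct k-subsets B₀, B₁, ..., B_s of [n] such that the number of d-subsets D with D ⊆ B₀ and D ⊄ B_j for all j ∈ [s] is exactly C(k-s, d-s). -/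
theorem macula_fully_disjunct (n d k s : ℕ) (hd : 1 ≤ d) (hdk : d < k) (hkn : k < n)
    (hs : s ≤ d) (hn : k + s ≤ n) :
    ∃ B : Fin (s + 1) → Finset (Fin n), Function.Injective B ∧ (∀ j, (B j).card = k) ∧
      (Finset.univ.filter (fun D : Finset (Fin n) =>
        D.card = d ∧ D ⊆ B 0 ∧ ∀ j ≠ 0, ¬ D ⊆ B j)).card
        = Nat.choose (k - s) (d - s) := by
  classical
  have hsk : s < k := lt_of_le_of_lt hs hdk
  have hB0mem : ∀ m ∈ Finset.range k, m < n := fun m hm => (Finset.mem_range.mp hm).trans hkn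
  set B0 : Finset (Fin n) := (Finset.range k).attachFin hB0mem with hB0def
  have hmemB0 : ∀ a : Fin n, a ∈ B0 ↔ (a : ℕ) < k := by
    intro a; rw [hB0def, Finset.mem_attachFin, Finset.mem_range]
  have hB0card : B0.card = k := by
    rw [hB0def, Finset.card_attachFin, Finset.card_range]
  have hxlt : ∀ i : Fin s, (i : ℕ) < n := fun i => (i.isLt.trans hsk).trans hkn
  have hylt : ∀ i : Fin s, k + (i : ℕ) < n :=
    fun i => lt_of_lt_of_le (by omega : k + (i : ℕ) < k + s) hn
  set x : Fin s → Fin n := fun i => ⟨i, hxlt i⟩ with hxdef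
  set y : Fin s → Fin n := fun i => ⟨k + i, hylt i⟩ with hydef
  have hxB0 : ∀ i, x i ∈ B0 := fun i => (hmemB0 _).mpr (i.isLt.trans hsk)
  have hyB0 : ∀ i, y i ∉ B0 := fun i => by
    rw [hmemB0]; simp [hydef]
  have hxy : ∀ i i', x i ≠ y i' := by
    intro i i' h
    have := congrArg Fin.val h
    simp [hxdef, hydef] at this
    omega
  set B : Fin (s + 1) → Finset (Fin n) :=
    Fin.cases B0 (fun i => insert (y i) (B0.erase (x i))) with hBdef
  have hB0' : B 0 = B0 := rfl
  have hBsucc : ∀ i : Fin s, B i.succ = insert (y i) (B0.erase (x i)) := fun i => rfl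
  have hyBsucc : ∀ i i', y i ∈ B i'.succ → i = i' := by
    intro i i' h
    rw [hBsucc, Finset.mem_insert] at h
    rcases h with h | h
    · have := congrArg Fin.val h; simp [hydef] at this; exact Fin.ext this
    · exact absurd (Finset.mem_of_mem_erase h) (hyB0 i)
  refine ⟨B, ?_, ?_, ?_⟩
  · -- injectivity
    intro a b hab
    induction a using Fin.cases with
    | zero =>
      induction b using Fin.cases with
      | zero => rfl
      | succ i =>
        exfalso
        have : y i ∈ B 0 := by
          rw [hab, hBsucc]; exact Finset.mem_insert_self _ _
        exact hyB0 i this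
    | succ i =>
      induction b using Fin.cases with
      | zero =>
        exfalso
        have : y i ∈ B 0 := by
          rw [← hab, hBsucc]; exact Finset.mem_insert_self _ _
        exact hyB0 i this
      | succ i' =>
        have : y i ∈ B i'.succ := by
          rw [← hab, hBsucc]; exact Finset.mem_insert_self _ _
        exact congrArg Fin.succ (hyBsucc i i' this)
  · -- cards
    intro j
    induction j using Fin.cases with
    | zero => exact hB0card
    | succ i =>
      rw [hBsucc, Finset.card_insert_of_notMem (fun h => hyB0 i (Finset.mem_of_mem_erase h)),
        Finset.card_erase_of_mem (hxB0 i), hB0card]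
      omega
  · -- the count
    set S : Finset (Fin n) := Finset.image x Finset.univ with hSdef
    have hxinj : Function.Injective x := by
      intro a b h; exact Fin.ext (by simpa [hxdef] using congrArg Fin.val h)
    have hScard : S.card = s := by
      rw [hSdef, Finset.card_image_of_injective _ hxinj, Finset.card_univ, Fintype.card_fin]
    have hSsub : S ⊆ B0 := by
      intro a ha
      rw [hSdef, Finset.mem_image] at ha
      obtain ⟨i, _, rfl⟩ := ha
      exact hxB0 i
    have hmemS : ∀ i : Fin s, x i ∈ S := fun i => Finset.mem_image_of_mem _ (Finset.mem_univ i)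
    -- characterize the filter condition
    have hchar : ∀ D : Finset (Fin n),
        (D.card = d ∧ D ⊆ B 0 ∧ ∀ j ≠ 0, ¬ D ⊆ B j) ↔ (D.card = d ∧ D ⊆ B0 ∧ S ⊆ D) := by
      intro D
      constructor
      · rintro ⟨h1, h2, h3⟩
        refine ⟨h1, h2, ?_⟩
        intro a ha
        rw [hSdef, Finset.mem_image] at ha
        obtain ⟨i, _, rfl⟩ := ha
        by_contra hxD
        refine h3 i.succ (Fin.succ_ne_zero i) ?_
        rw [hBsucc]
        intro b hb
        exact Finset.mem_insert_of_mem (Finset.mem_erase_of_ne_of_mem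
          (fun hbe => hxD (hbe ▸ hb)) (h2 hb))
      · rintro ⟨h1, h2, h3⟩
        refine ⟨h1, h2, ?_⟩
        intro j hj hsub
        induction j using Fin.cases with
        | zero => exact hj rfl
        | succ i =>
          have hxi : x i ∈ B i.succ := hsub (h3 (hmemS i))
          rw [hBsucc, Finset.mem_insert] at hxi
          rcases hxi with h | h
          · exact hxy i i h
          · exact (Finset.mem_erase.mp h).1 rfl
    have hfilter : Finset.univ.filter (fun D : Finset (Fin n) =>
        D.card = d ∧ D ⊆ B 0 ∧ ∀ j ≠ 0, ¬ D ⊆ B j)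
        = Finset.univ.filter (fun D : Finset (Fin n) => D.card = d ∧ D ⊆ B0 ∧ S ⊆ D) := by
      apply Finset.filter_congr
      intro D _
      simpa using hchar D
    rw [hfilter]
    have hcard' : (B0 \ S).card = k - s := by
      rw [Finset.card_sdiff_of_subset hSsub, hB0card, hScard]
    rw [← hcard', ← Finset.card_powersetCard (d - s) (B0 \ S)]
    apply Finset.card_nbij' (fun D => D \ S) (fun E => E ∪ S)
    · intro D hD
      simp only [Finset.mem_coe, Finset.mem_filter, Finset.mem_univ, true_and] at hD
      obtain ⟨h1, h2, h3⟩ := hD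
      rw [Finset.mem_coe, Finset.mem_powersetCard]
      exact ⟨Finset.sdiff_subset_sdiff h2 le_rfl,
        by rw [Finset.card_sdiff_of_subset h3, h1, hScard]⟩
    · intro E hE
      rw [Finset.mem_coe, Finset.mem_powersetCard] at hE
      obtain ⟨hE1, hE2⟩ := hE
      have hdisj : Disjoint E S := Finset.disjoint_of_subset_left hE1 Finset.sdiff_disjoint
      simp only [Finset.mem_coe, Finset.mem_filter, Finset.mem_univ, true_and]
      refine ⟨?_, ?_, Finset.subset_union_right⟩
      · rw [Finset.card_union_of_disjoint hdisj, hE2, hScard]; omega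
      · exact Finset.union_subset (hE1.trans Finset.sdiff_subset) hSsub
    · intro D hD
      simp only [Finset.mem_coe, Finset.mem_filter, Finset.mem_univ, true_and] at hD
      exact Finset.sdiff_union_of_subset hD.2.2
    · intro E hE
      rw [Finset.mem_coe, Finset.mem_powersetCard] at hE
      have hdisj : Disjoint E S := Finset.disjoint_of_subset_left hE.1 Finset.sdiff_disjoint
      beta_reduce
      rw [Finset.union_sdiff_right, Finset.sdiff_eq_self_of_disjoint hdisj]
end

section
/- Main theorem (disjunctness of M(i;d,k,n)): Let 1 ≤ s ≤ i, ⌊(d+1)/2⌋ ≤ i ≤ d < k, and n - k - s(k+d-2i) ≥ d - i. Then for any s+1 distinct k-subsets B₀, B₁, ..., B_s of [n], the number of d-subsets D of [n] satisfying |D ∩ B₀| = i and |D ∩ B_j| ≠ i for all j ∈ [s] is at least C(k-s, i-s) · C(n-k-s(k+d-2i), d-i). In particular, M(i;d,k,n) is s^{e₂}-disjunct with e₂ = C(k-s, i-s)·C(n-k-s(k+d-2i), d-i) - 1. -/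
theorem main_disjunct (n d k i s : ℕ) (hs : 1 ≤ s) (hsi : s ≤ i)
    (hi : (d + 1) / 2 ≤ i) (hid : i ≤ d) (hdk : d < k)
    (hn : k + s * (k + d - 2 * i) + (d - i) ≤ n)
    (B : Fin (s + 1) → Finset (Fin n)) (hB : ∀ j, (B j).card = k)
    (hinj : Function.Injective B) :
    Nat.choose (k - s) (i - s) * Nat.choose (n - k - s * (k + d - 2 * i)) (d - i) ≤
      (Finset.univ.filter (fun D : Finset (Fin n) =>
        D.card = d ∧ (D ∩ B 0).card = i ∧ ∀ j ≠ 0, (D ∩ B j).card ≠ i)).card := by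
  classical
  have hik : i ≤ k := le_of_lt (lt_of_le_of_lt hid hdk)
  have hd2i : d ≤ 2 * i := by omega
  have hnpos : 0 < n := by omega
  -- pick x j ∈ B 0 \ B j for j ≠ 0
  have hx : ∀ j : Fin (s+1), ∃ x : Fin n, j ≠ 0 → x ∈ B 0 \ B j := by
    intro j
    by_cases hj : j = 0
    · exact ⟨⟨0, hnpos⟩, fun h => absurd hj h⟩
    · have hne : B 0 ≠ B j := fun h => hj (hinj h).symm
      have hne2 : (B 0 \ B j).Nonempty := by
        rw [Finset.sdiff_nonempty]
        intro hsub
        exact hne (Finset.eq_of_subset_of_card_le hsub (by rw [hB, hB]))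
      exact ⟨hne2.choose, fun _ => hne2.choose_spec⟩
  choose x hxmem using hx
  set X : Finset (Fin n) := (Finset.univ.erase (0 : Fin (s+1))).image x with hXdef
  have hXsub : X ⊆ B 0 := by
    intro a ha
    simp only [hXdef, Finset.mem_image, Finset.mem_erase] at ha
    obtain ⟨j, ⟨hj, -⟩, rfl⟩ := ha
    exact (Finset.mem_sdiff.mp (hxmem j hj)).1
  have hxX : ∀ j : Fin (s+1), j ≠ 0 → x j ∈ X := fun j hj =>
    Finset.mem_image_of_mem x (Finset.mem_erase.mpr ⟨hj, Finset.mem_univ j⟩)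
  have hcerase : (Finset.univ.erase (0 : Fin (s+1))).card = s := by
    rw [Finset.card_erase_of_mem (Finset.mem_univ 0), Finset.card_univ]
    simp
  set t := X.card with htdef
  have hts : t ≤ s := by
    calc t ≤ (Finset.univ.erase (0 : Fin (s+1))).card := Finset.card_image_le
    _ = s := hcerase
  have hti : t ≤ i := le_trans hts hsi
  -- W and A
  set W : Fin (s+1) → Finset (Fin n) := fun j =>
    if (B j \ B 0).card ≤ k + d - 2 * i then B j \ B 0 else ∅ with hWdef
  set A : Finset (Fin n) := B 0 ∪ (Finset.univ.erase (0 : Fin (s+1))).biUnion W with hAdef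
  have hWcard : ∀ j, (W j).card ≤ k + d - 2 * i := by
    intro j
    rw [hWdef]
    by_cases h : (B j \ B 0).card ≤ k + d - 2 * i
    · simp only [if_pos h]; exact h
    · simp [h]
  have hAcard : A.card ≤ k + s * (k + d - 2 * i) := by
    calc A.card ≤ (B 0).card + ((Finset.univ.erase (0:Fin (s+1))).biUnion W).card :=
          Finset.card_union_le _ _
    _ ≤ k + s * (k + d - 2*i) := by
        refine Nat.add_le_add (le_of_eq (hB 0)) ?_
        calc ((Finset.univ.erase (0:Fin (s+1))).biUnion W).card
            ≤ ∑ j ∈ Finset.univ.erase (0:Fin (s+1)), (W j).card := Finset.card_biUnion_le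
        _ ≤ ∑ _j ∈ Finset.univ.erase (0:Fin (s+1)), (k + d - 2*i) :=
            Finset.sum_le_sum (fun j _ => hWcard j)
        _ = s * (k + d - 2*i) := by
            rw [Finset.sum_const, smul_eq_mul, hcerase]
  have hB0A : B 0 ⊆ A := Finset.subset_union_left
  set U : Finset (Fin n) := Finset.univ \ A with hUdef
  set src := ((B 0 \ X).powersetCard (i - t)) ×ˢ (U.powersetCard (d - i)) with hsrcdef
  set F : Finset (Fin n) × Finset (Fin n) → Finset (Fin n) :=
    fun p => (p.1 ∪ X) ∪ p.2 with hFdef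
  -- basic facts about members of src
  have hfacts : ∀ p : Finset (Fin n) × Finset (Fin n), p ∈ src →
      (F p ∩ B 0 = p.1 ∪ X) ∧ (F p \ A = p.2) ∧ (p.1 ∪ X).card = i ∧
        (F p).card = d := by
    rintro ⟨S', T⟩ hp
    rw [hsrcdef, Finset.mem_product, Finset.mem_powersetCard, Finset.mem_powersetCard] at hp
    obtain ⟨⟨hS'sub, hS'card⟩, hTsub, hTcard⟩ := hp
    have hdisjS'X : Disjoint S' X :=
      (Finset.sdiff_disjoint).mono_left hS'sub
    have hSB0 : S' ∪ X ⊆ B 0 :=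
      Finset.union_subset (hS'sub.trans (Finset.sdiff_subset)) hXsub
    have hTA : Disjoint T A := by
      have : Disjoint U A := Finset.sdiff_disjoint
      exact this.mono_left hTsub
    have hTB0 : Disjoint T (B 0) := hTA.mono_right hB0A
    have hScard : (S' ∪ X).card = i := by
      rw [Finset.card_union_of_disjoint hdisjS'X, hS'card]
      omega
    refine ⟨?_, ?_, hScard, ?_⟩
    · show ((S' ∪ X) ∪ T) ∩ B 0 = S' ∪ X
      rw [Finset.union_inter_distrib_right,
        Finset.inter_eq_left.mpr hSB0,
        Finset.disjoint_iff_inter_eq_empty.mp hTB0, Finset.union_empty]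
    · show ((S' ∪ X) ∪ T) \ A = T
      rw [Finset.union_sdiff_distrib,
        Finset.sdiff_eq_empty_iff_subset.mpr (hSB0.trans hB0A),
        Finset.empty_union,
        (Finset.sdiff_eq_self_iff_disjoint).mpr hTA]
    · show ((S' ∪ X) ∪ T).card = d
      have hdisj : Disjoint (S' ∪ X) T := (hTA.mono_right (hSB0.trans hB0A)).symm
      rw [Finset.card_union_of_disjoint hdisj, hScard, hTcard]
      omega
  -- members of src map into the filter set
  have hmem : ∀ p ∈ src, F p ∈ Finset.univ.filter (fun D : Finset (Fin n) =>
      D.card = d ∧ (D ∩ B 0).card = i ∧ ∀ j ≠ 0, (D ∩ B j).card ≠ i) := by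
    rintro ⟨S', T⟩ hp
    obtain ⟨hFB0, hFA, hScard, hFcard⟩ := hfacts _ hp
    rw [hsrcdef, Finset.mem_product, Finset.mem_powersetCard, Finset.mem_powersetCard] at hp
    obtain ⟨⟨hS'sub, hS'card⟩, hTsub, hTcard⟩ := hp
    rw [Finset.mem_filter]
    refine ⟨Finset.mem_univ _, hFcard, by rw [hFB0]; exact hScard, ?_⟩
    intro j hj
    have hTA : Disjoint T A := (Finset.sdiff_disjoint).mono_left hTsub
    have hSB0 : S' ∪ X ⊆ B 0 :=
      Finset.union_subset (hS'sub.trans (Finset.sdiff_subset)) hXsub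
    have hxj := Finset.mem_sdiff.mp (hxmem j hj)
    -- show (F (S',T) ∩ B j).card < i
    have hsplit : F (S', T) ∩ B j = ((S' ∪ X) ∩ B j) ∪ (T ∩ B j) := by
      show ((S' ∪ X) ∪ T) ∩ B j = _
      rw [Finset.union_inter_distrib_right]
    have hSint : ((S' ∪ X) ∩ B j).card ≤ (B j ∩ B 0).card := by
      refine Finset.card_le_card ?_
      intro y hy
      rw [Finset.mem_inter] at hy ⊢
      exact ⟨hy.2, hSB0 hy.1⟩
    have hlt : (F (S', T) ∩ B j).card < i := by
      rw [hsplit]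
      by_cases hc : (B j \ B 0).card ≤ k + d - 2 * i
      · -- W j = B j \ B 0 ⊆ A, so T ∩ B j = ∅
        have hWj : B j \ B 0 ⊆ A := by
          have h1 : W j ⊆ (Finset.univ.erase (0 : Fin (s+1))).biUnion W :=
            Finset.subset_biUnion_of_mem W (Finset.mem_erase.mpr ⟨hj, Finset.mem_univ j⟩)
          have h2 : W j = B j \ B 0 := by rw [hWdef]; simp [hc]
          rw [h2] at h1
          exact h1.trans Finset.subset_union_right
        have hTBj : T ∩ B j = ∅ := by
          rw [← Finset.disjoint_iff_inter_eq_empty]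
          refine hTA.mono_right ?_
          intro y hy
          by_cases hy0 : y ∈ B 0
          · exact hB0A hy0
          · exact hWj (Finset.mem_sdiff.mpr ⟨hy, hy0⟩)
        rw [hTBj, Finset.union_empty]
        -- (S'∪X) ∩ B j ⊆ (S'∪X).erase (x j)
        have hsub2 : (S' ∪ X) ∩ B j ⊆ (S' ∪ X).erase (x j) := by
          intro y hy
          rw [Finset.mem_inter] at hy
          rw [Finset.mem_erase]
          refine ⟨?_, hy.1⟩
          rintro rfl
          exact hxj.2 hy.2
        calc ((S' ∪ X) ∩ B j).card ≤ ((S' ∪ X).erase (x j)).card :=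
              Finset.card_le_card hsub2
        _ < (S' ∪ X).card := Finset.card_erase_lt_of_mem
              (Finset.mem_union_right _ (hxX j hj))
        _ = i := hScard
      · -- big case
        have hBjB0 : (B j \ B 0).card + (B j ∩ B 0).card = k := by
          rw [Finset.card_sdiff_add_card_inter, hB]
        have hTle : (T ∩ B j).card ≤ d - i :=
          le_trans (Finset.card_le_card (Finset.inter_subset_left)) (le_of_eq hTcard)
        calc _ ≤ ((S' ∪ X) ∩ B j).card + (T ∩ B j).card := Finset.card_union_le _ _
        _ < i := by omega
    omega
  -- injectivity
  have hinjF : Set.InjOn F ↑src := by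
    intro p hp q hq heq
    obtain ⟨hpB0, hpA, -, -⟩ := hfacts p hp
    obtain ⟨hqB0, hqA, -, -⟩ := hfacts q hq
    have h1 : p.1 ∪ X = q.1 ∪ X := by rw [← hpB0, ← hqB0, heq]
    have h2 : p.2 = q.2 := by rw [← hpA, ← hqA, heq]
    -- recover p.1 from p.1 ∪ X
    rw [hsrcdef, Finset.mem_coe, Finset.mem_product, Finset.mem_powersetCard] at hp hq
    have hdp : Disjoint p.1 X := (Finset.sdiff_disjoint).mono_left hp.1.1
    have hdq : Disjoint q.1 X := (Finset.sdiff_disjoint).mono_left hq.1.1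
    have h3 : p.1 = q.1 := by
      have := congrArg (fun S => S \ X) h1
      simpa [Finset.union_sdiff_cancel_right hdp,
        Finset.union_sdiff_cancel_right hdq] using this
    exact Prod.ext h3 h2
  have hcard : src.card ≤ (Finset.univ.filter (fun D : Finset (Fin n) =>
      D.card = d ∧ (D ∩ B 0).card = i ∧ ∀ j ≠ 0, (D ∩ B j).card ≠ i)).card :=
    Finset.card_le_card_of_injOn F hmem hinjF
  have hsrccard : src.card = Nat.choose (k - t) (i - t) * Nat.choose (n - A.card) (d - i) := by
    rw [hsrcdef, Finset.card_product, Finset.card_powersetCard, Finset.card_powersetCard]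
    congr 2
    · rw [Finset.card_sdiff_of_subset hXsub, hB 0]
    · rw [hUdef, Finset.card_sdiff_of_subset (Finset.subset_univ A), Finset.card_univ, Fintype.card_fin]
  have hmono2 : n - k - s * (k + d - 2 * i) ≤ n - A.card := by
    revert hAcard hn
    generalize s * (k + d - 2 * i) = E
    intro h1 h2
    omega
  calc Nat.choose (k - s) (i - s) * Nat.choose (n - k - s * (k + d - 2 * i)) (d - i)
      ≤ Nat.choose (k - t) (i - t) * Nat.choose (n - A.card) (d - i) := by
        apply Nat.mul_le_mul
        · have e1 : i - s = (k - s) - (k - i) := by omega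
          have e2 : i - t = (k - t) - (k - i) := by omega
          rw [e1, e2, Nat.choose_symm (by omega), Nat.choose_symm (by omega)]
          exact Nat.choose_le_choose _ (by omega)
        · exact Nat.choose_le_choose _ hmono2
    _ = src.card := hsrccard.symm
    _ ≤ _ := hcard
end

section
/- Special case s = 1 of the main theorem: Let ⌊(d+1)/2⌋ ≤ i ≤ d < k and n - (2k + d - 2i) ≥ d - i. Then for any two distinct k-subsets B₀ and B₁ of [n], the number of d-subsets D of [n] with |D ∩ B₀| = i and |D ∩ B₁| ≠ i is at least C(k-1, i-1)·C(n-2k-d+2i, d-i). -/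
theorem main_disjunct_s_one (n d k i : ℕ) (hs : 1 ≤ i)
    (hi : (d + 1) / 2 ≤ i) (hid : i ≤ d) (hdk : d < k)
    (hn : 2 * k + d - 2 * i + (d - i) ≤ n)
    (B₀ B₁ : Finset (Fin n)) (hB₀ : B₀.card = k) (hB₁ : B₁.card = k) (hne : B₀ ≠ B₁) :
    Nat.choose (k - 1) (i - 1) * Nat.choose (n - (2 * k + d - 2 * i)) (d - i) ≤
      (Finset.univ.filter (fun D : Finset (Fin n) =>
        D.card = d ∧ (D ∩ B₀).card = i ∧ (D ∩ B₁).card ≠ i)).card := by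
  classical
  have hd2i : d ≤ 2 * i := by omega
  set m := (B₀ ∩ B₁).card with hmdef
  have hmk : m ≤ k := hB₀ ▸ Finset.card_le_card Finset.inter_subset_left
  have hunion : (B₀ ∪ B₁).card = 2 * k - m := by
    have := Finset.card_union_add_card_inter B₀ B₁
    omega
  have hub : 2 * k - m ≤ n := by
    have := Finset.card_le_univ (B₀ ∪ B₁)
    simp [Fintype.card_fin] at this
    omega
  -- pick x ∈ B₀ \ B₁
  have hxex : ∃ x ∈ B₀, x ∉ B₁ := by
    by_contra h
    push_neg at h
    exact hne (Finset.eq_of_subset_of_card_le (fun a ha => h a ha) (by omega))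
  obtain ⟨x, hxB₀, hxB₁⟩ := hxex
  -- pick W ⊆ B₁ \ B₀ of size (2i-d) - min (2i-d) m
  have hsd : (B₁ \ B₀).card = k - m := by
    have := Finset.card_sdiff_add_card_inter B₁ B₀
    rw [Finset.inter_comm] at this
    omega
  obtain ⟨W, hWsub, hWcard⟩ :
      ∃ W ⊆ B₁ \ B₀, W.card = (2 * i - d) - min (2 * i - d) m := by
    apply Finset.exists_subset_card_eq
    omega
  -- the base set
  have hbase : ((B₀ ∪ B₁)ᶜ : Finset (Fin n)).card = n - (2 * k - m) := by
    rw [Finset.card_compl, Fintype.card_fin, hunion]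
  have hdisjW : Disjoint ((B₀ ∪ B₁)ᶜ : Finset (Fin n)) W := by
    refine Finset.disjoint_left.mpr fun a ha haW => ?_
    have : a ∈ B₀ ∪ B₁ := Finset.mem_union_right _ (Finset.mem_sdiff.mp (hWsub haW)).1
    simp at ha
    exact absurd this (by simpa using ha)
  have hbigU : ((B₀ ∪ B₁)ᶜ ∪ W).card = n - (2 * k - m) + ((2 * i - d) - min (2 * i - d) m) := by
    rw [Finset.card_union_of_disjoint hdisjW, hbase, hWcard]
  -- pick U with W ⊆ U ⊆ base ∪ W, |U| = N
  obtain ⟨U, hWU, hUsub, hUcard⟩ :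
      ∃ U, W ⊆ U ∧ U ⊆ (B₀ ∪ B₁)ᶜ ∪ W ∧ U.card = n - (2 * k + d - 2 * i) := by
    apply Finset.exists_subsuperset_card_eq (Finset.subset_union_right) <;> omega
  -- U disjoint from B₀
  have hUB₀ : ∀ a ∈ U, a ∉ B₀ := by
    intro a haU haB₀
    rcases Finset.mem_union.mp (hUsub haU) with h | h
    · exact (Finset.mem_compl.mp h) (Finset.mem_union_left _ haB₀)
    · exact (Finset.mem_sdiff.mp (hWsub h)).2 haB₀
  -- U ∩ B₁ is small
  have hUB₁ : (U ∩ B₁).card ≤ (2 * i - d) - min (2 * i - d) m := by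
    rw [← hWcard]
    apply Finset.card_le_card
    intro a ha
    obtain ⟨haU, haB₁⟩ := Finset.mem_inter.mp ha
    rcases Finset.mem_union.mp (hUsub haU) with h | h
    · exact absurd (Finset.mem_union_right _ haB₁) (Finset.mem_compl.mp h)
    · exact h
  -- the injection
  set A := ((B₀.erase x).powersetCard (i - 1)) ×ˢ (U.powersetCard (d - i)) with hA
  have key : A.card ≤ (Finset.univ.filter (fun D : Finset (Fin n) =>
      D.card = d ∧ (D ∩ B₀).card = i ∧ (D ∩ B₁).card ≠ i)).card := by
    apply Finset.card_le_card_of_injOn (fun p => insert x (p.1 ∪ p.2))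
    · rintro ⟨S, T⟩ hp
      obtain ⟨hS, hT⟩ := Finset.mem_product.mp hp
      obtain ⟨hSsub, hScard⟩ := Finset.mem_powersetCard.mp hS
      obtain ⟨hTsub, hTcard⟩ := Finset.mem_powersetCard.mp hT
      have hSB₀ : S ⊆ B₀ := hSsub.trans (Finset.erase_subset _ _)
      have hxS : x ∉ S := fun h => (Finset.mem_erase.mp (hSsub h)).1 rfl
      have hxT : x ∉ T := fun h => hUB₀ x (hTsub h) hxB₀
      have hST : Disjoint S T := Finset.disjoint_left.mpr
        (fun a haS haT => hUB₀ a (hTsub haT) (hSB₀ haS))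
      have hxST : x ∉ S ∪ T := by simp [hxS, hxT]
      -- card
      have hcard : (insert x (S ∪ T)).card = d := by
        rw [Finset.card_insert_of_notMem hxST, Finset.card_union_of_disjoint hST,
          hScard, hTcard]
        omega
      -- intersection with B₀
      have hTB₀ : T ∩ B₀ = ∅ := Finset.eq_empty_of_forall_notMem fun a ha =>
        hUB₀ a (hTsub (Finset.mem_inter.mp ha).1) (Finset.mem_inter.mp ha).2
      have hinter₀ : insert x (S ∪ T) ∩ B₀ = insert x S := by
        rw [Finset.insert_inter_of_mem hxB₀, Finset.union_inter_distrib_right, hTB₀,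
          Finset.union_empty, Finset.inter_eq_left.mpr hSB₀]
      have hc₀ : (insert x (S ∪ T) ∩ B₀).card = i := by
        rw [hinter₀, Finset.card_insert_of_notMem hxS, hScard]
        omega
      -- intersection with B₁
      have hc₁ : (insert x (S ∪ T) ∩ B₁).card < i := by
        rw [Finset.insert_inter_of_notMem hxB₁, Finset.union_inter_distrib_right]
        calc (S ∩ B₁ ∪ T ∩ B₁).card ≤ (S ∩ B₁).card + (T ∩ B₁).card :=
              Finset.card_union_le _ _
          _ < i := by
              have h1 : (S ∩ B₁).card ≤ m := Finset.card_le_card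
                (Finset.inter_subset_inter_right hSB₀)
              have h2 : (S ∩ B₁).card ≤ i - 1 := hScard ▸ Finset.card_le_card
                Finset.inter_subset_left
              have h3 : (T ∩ B₁).card ≤ d - i := hTcard ▸ Finset.card_le_card
                Finset.inter_subset_left
              have h4 : (T ∩ B₁).card ≤ (2 * i - d) - min (2 * i - d) m :=
                le_trans (Finset.card_le_card
                  (Finset.inter_subset_inter hTsub (subset_refl _))) hUB₁
              omega
      simp only [Finset.mem_coe, Finset.mem_filter, Finset.mem_univ, true_and]
      exact ⟨hcard, hc₀, Nat.ne_of_lt hc₁⟩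
    · rintro ⟨S₁, T₁⟩ hp₁ ⟨S₂, T₂⟩ hp₂ heq
      simp only [Finset.mem_coe, hA, Finset.mem_product, Finset.mem_powersetCard] at hp₁ hp₂
      obtain ⟨⟨hS₁, _⟩, ⟨hT₁, _⟩⟩ := hp₁
      obtain ⟨⟨hS₂, _⟩, ⟨hT₂, _⟩⟩ := hp₂
      have recS : ∀ S T : Finset (Fin n), S ⊆ B₀.erase x → T ⊆ U →
          insert x (S ∪ T) ∩ B₀.erase x = S := by
        intro S T hS hT
        ext a
        simp only [Finset.mem_inter, Finset.mem_insert, Finset.mem_union, Finset.mem_erase]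
        constructor
        · rintro ⟨rfl | haS | haT, hax, haB₀⟩
          · exact absurd rfl hax
          · exact haS
          · exact absurd haB₀ (hUB₀ a (hT haT))
        · intro haS
          exact ⟨Or.inr (Or.inl haS), Finset.mem_erase.mp (hS haS)⟩
      have recT : ∀ S T : Finset (Fin n), S ⊆ B₀.erase x → T ⊆ U →
          insert x (S ∪ T) ∩ U = T := by
        intro S T hS hT
        ext a
        simp only [Finset.mem_inter, Finset.mem_insert, Finset.mem_union]
        constructor
        · rintro ⟨rfl | haS | haT, haU⟩
          · exact absurd hxB₀ (hUB₀ _ haU)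
          · exact absurd ((Finset.erase_subset _ _) (hS haS)) (hUB₀ a haU)
          · exact haT
        · intro haT
          exact ⟨Or.inr (Or.inr haT), hT haT⟩
      have heq' : insert x (S₁ ∪ T₁) = insert x (S₂ ∪ T₂) := heq
      have e1 : S₁ = S₂ := by
        rw [← recS S₁ T₁ hS₁ hT₁, ← recS S₂ T₂ hS₂ hT₂, heq']
      have e2 : T₁ = T₂ := by
        rw [← recT S₁ T₁ hS₁ hT₁, ← recT S₂ T₂ hS₂ hT₂, heq']
      exact Prod.ext e1 e2
  -- compute A.card
  have hAcard : A.card = Nat.choose (k - 1) (i - 1) *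
      Nat.choose (n - (2 * k + d - 2 * i)) (d - i) := by
    rw [hA, Finset.card_product, Finset.card_powersetCard, Finset.card_powersetCard,
      Finset.card_erase_of_mem hxB₀, hB₀, hUcard]
  omega
end

section
/- The matrix M(3;5,7,50) is 3^{299}-disjunct: for any 4 distinct 7-subsets B₀, B₁, B₂, B₃ of [50], the number of 5-subsets D of [50] with |D ∩ B₀| = 3 and |D ∩ B_j| ≠ 3 for j = 1, 2, 3 is at least 300. -/
theorem example_50 (B : Fin 4 → Finset (Fin 50)) (hB : ∀ j, (B j).card = 7)
    (hinj : Function.Injective B) :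
    300 ≤ (Finset.univ.filter (fun D : Finset (Fin 50) =>
      D.card = 5 ∧ (D ∩ B 0).card = 3 ∧ ∀ j ≠ 0, (D ∩ B j).card ≠ 3)).card := by
  classical
  -- choose x_j ∈ B 0 \ B j for each j ≠ 0
  have key : ∀ j : Fin 4, j ≠ 0 → ∃ x, x ∈ B 0 ∧ x ∉ B j := by
    intro j hj
    by_contra h
    push_neg at h
    have hsub : B 0 ⊆ B j := fun x hx => h x hx
    have heq : B 0 = B j :=
      Finset.eq_of_subset_of_card_le hsub (by rw [hB, hB])
    exact hj (hinj heq).symm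
  choose x hx1 hx2 using key
  set T : Finset (Fin 50) :=
    {x 1 (by decide), x 2 (by decide), x 3 (by decide)} with hT
  have hTsub : T ⊆ B 0 := by
    intro a ha
    rw [hT] at ha
    simp only [Finset.mem_insert, Finset.mem_singleton] at ha
    rcases ha with h | h | h <;> subst h <;> apply hx1
  have hTcard : T.card ≤ 3 := by
    rw [hT]
    refine (Finset.card_insert_le _ _).trans ?_
    have := Finset.card_insert_le (x 2 (by decide))
      ({x 3 (by decide)} : Finset (Fin 50))
    simp only [Finset.card_singleton] at this ⊢
    omega
  obtain ⟨S, hTS, hSB, hScard⟩ :=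
    Finset.exists_subsuperset_card_eq hTsub hTcard (by rw [hB]; norm_num)
  -- x_j ∈ S for each j ≠ 0
  have hxS : ∀ (j : Fin 4) (hj : j ≠ 0), x j hj ∈ S := by
    intro j hj
    apply hTS
    rw [hT]
    fin_cases j
    · exact absurd rfl hj
    · simp
    · simp
    · simp
  -- the per-column forbidden sets
  set FF : Fin 4 → Finset (Fin 50) :=
    fun j => if (S ∩ B j).Nonempty then B j \ B 0 else ∅ with hFF
  have hFFcard : ∀ j, (FF j).card ≤ 6 := by
    intro j
    rw [hFF]
    by_cases hne : (S ∩ B j).Nonempty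
    · simp only [hne, if_true]
      have h1 : (B j ∩ B 0).Nonempty := by
        obtain ⟨a, ha⟩ := hne
        simp only [Finset.mem_inter] at ha
        exact ⟨a, Finset.mem_inter.mpr ⟨ha.2, hSB ha.1⟩⟩
      have h2 := Finset.card_inter_add_card_sdiff (B j) (B 0)
      have h3 : 1 ≤ (B j ∩ B 0).card := Finset.card_pos.mpr h1
      rw [hB] at h2
      omega
    · simp [hne]
  set F : Finset (Fin 50) := B 0 ∪ FF 1 ∪ FF 2 ∪ FF 3 with hF
  have hFcard : F.card ≤ 25 := by
    rw [hF]
    refine (Finset.card_union_le _ _).trans ?_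
    have h1 := Finset.card_union_le (B 0 ∪ FF 1) (FF 2)
    have h2 := Finset.card_union_le (B 0) (FF 1)
    have := hFFcard 1
    have := hFFcard 2
    have := hFFcard 3
    have := hB 0
    omega
  set Free : Finset (Fin 50) := Fᶜ with hFree
  have hFreeCard : 25 ≤ Free.card := by
    rw [hFree, Finset.card_compl]
    have : Fintype.card (Fin 50) = 50 := by simp
    omega
  have hFreeB0 : ∀ a ∈ Free, a ∉ B 0 := by
    intro a ha hab
    rw [hFree, Finset.mem_compl] at ha
    exact ha (by rw [hF]; simp [hab])
  -- properties of D = S ∪ E for E a 2-subset of Free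
  have hmain : ∀ E ∈ Free.powersetCard 2,
      (S ∪ E) ∈ Finset.univ.filter (fun D : Finset (Fin 50) =>
        D.card = 5 ∧ (D ∩ B 0).card = 3 ∧ ∀ j ≠ 0, (D ∩ B j).card ≠ 3) := by
    intro E hE
    rw [Finset.mem_powersetCard] at hE
    obtain ⟨hEF, hEcard⟩ := hE
    have hEB0 : E ∩ B 0 = ∅ := by
      rw [Finset.eq_empty_iff_forall_notMem]
      intro a ha
      rw [Finset.mem_inter] at ha
      exact hFreeB0 a (hEF ha.1) ha.2
    have hdisj : Disjoint S E := by
      rw [Finset.disjoint_left]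
      intro a haS haE
      exact hFreeB0 a (hEF haE) (hSB haS)
    have hinter0 : (S ∪ E) ∩ B 0 = S := by
      rw [Finset.union_inter_distrib_right, hEB0,
        Finset.inter_eq_left.mpr hSB, Finset.union_empty]
    rw [Finset.mem_filter]
    refine ⟨Finset.mem_univ _, ?_, ?_, ?_⟩
    · rw [Finset.card_union_of_disjoint hdisj, hScard, hEcard]
    · rw [hinter0]; exact hScard
    · intro j hj
      rw [Finset.union_inter_distrib_right]
      by_cases hne : (S ∩ B j).Nonempty
      · -- here E ∩ B j = ∅ since B j \ B 0 ⊆ F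
        have hEBj : E ∩ B j = ∅ := by
          rw [Finset.eq_empty_iff_forall_notMem]
          intro a ha
          rw [Finset.mem_inter] at ha
          have haFree := hEF ha.1
          rw [hFree, Finset.mem_compl] at haFree
          apply haFree
          rw [hF]
          by_cases hab0 : a ∈ B 0
          · simp [hab0]
          · have haFFj : a ∈ FF j := by
              rw [hFF]
              simp only [hne, if_true, Finset.mem_sdiff]
              exact ⟨ha.2, hab0⟩
            fin_cases j
            · exact absurd rfl hj
            · simp only [Finset.mem_union]; left; left; right; exact haFFj
            · simp only [Finset.mem_union]; left; right; exact haFFj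
            · simp only [Finset.mem_union]; right; exact haFFj
        rw [hEBj, Finset.union_empty]
        have hsub : S ∩ B j ⊆ S.erase (x j hj) := by
          intro a ha
          rw [Finset.mem_inter] at ha
          rw [Finset.mem_erase]
          refine ⟨?_, ha.1⟩
          intro haj
          subst haj
          exact hx2 j hj ha.2
        have := Finset.card_le_card hsub
        rw [Finset.card_erase_of_mem (hxS j hj), hScard] at this
        omega
      · rw [Finset.not_nonempty_iff_eq_empty] at hne
        rw [hne, Finset.empty_union]
        have h1 : (E ∩ B j).card ≤ 2 := by
          rw [← hEcard]; exact Finset.card_le_card Finset.inter_subset_left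
        omega
  -- counting
  have hinjOn : Set.InjOn (fun E => S ∪ E) (Free.powersetCard 2) := by
    intro E hE E' hE' heq
    rw [Finset.mem_coe, Finset.mem_powersetCard] at hE hE'
    have hcancel : ∀ E₀ : Finset (Fin 50), E₀ ⊆ Free → (S ∪ E₀) \ B 0 = E₀ := by
      intro E₀ hE₀
      rw [Finset.union_sdiff_distrib, Finset.sdiff_eq_empty_iff_subset.mpr hSB,
        Finset.empty_union, Finset.sdiff_eq_self_iff_disjoint]
      rw [Finset.disjoint_left]
      intro a ha hab
      exact hFreeB0 a (hE₀ ha) hab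
    have := congrArg (· \ B 0) heq
    simpa [hcancel E hE.1, hcancel E' hE'.1] using this
  calc (300 : ℕ) = Nat.choose 25 2 := by norm_num [Nat.choose]
    _ ≤ Nat.choose Free.card 2 := Nat.choose_le_choose 2 hFreeCard
    _ = (Free.powersetCard 2).card := (Finset.card_powersetCard 2 Free).symm
    _ = ((Free.powersetCard 2).image (fun E => S ∪ E)).card :=
        (Finset.card_image_of_injOn hinjOn).symm
    _ ≤ _ := by
        apply Finset.card_le_card
        intro D hD
        rw [Finset.mem_image] at hD
        obtain ⟨E, hE, rfl⟩ := hD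
        exact hmain E hE
end

section
/- The matrix M(3;4,5,13) is 2^{5}-disjunct: for any 3 distinct 5-subsets B₀, B₁, B₂ of [13], the number of 4-subsets D of [13] with |D ∩ B₀| = 3 and |D ∩ B_j| ≠ 3 for j = 1, 2 is at least 6. -/
open Finset

private lemma insert_inter_card' (T : Finset (Fin 13)) (x : Fin 13) (C : Finset (Fin 13))
    (hx : x ∉ T) : (insert x T ∩ C).card = (T ∩ C).card + (if x ∈ C then 1 else 0) := by
  by_cases h : x ∈ C
  · rw [Finset.insert_inter_of_mem h, Finset.card_insert_of_notMem (by simp [hx]), if_pos h]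
  · rw [Finset.insert_inter_of_notMem h, if_neg h, add_zero]

private lemma bad_le' (A C : Finset (Fin 13)) (hA : A.card = 5) (hC : C.card = 5) (hne : A ≠ C) :
    ((A.powersetCard 3 ×ˢ Aᶜ).filter
      (fun p => (insert p.2 p.1 ∩ C).card = 3)).card ≤ 34 := by
  set m := (A ∩ C).card with hm
  have hmle : m ≤ 4 := by
    by_contra h
    push_neg at h
    have hle : (A ∩ C).card ≤ 5 := le_trans (card_le_card inter_subset_left) hA.le
    have h1 : A ∩ C = A := eq_of_subset_of_card_le inter_subset_left (by omega)
    have h2 : A ∩ C = C := eq_of_subset_of_card_le inter_subset_right (by omega)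
    exact hne (h1.symm.trans h2)
  have hunion : (A ∪ C).card = 10 - m := by
    have := Finset.card_union_add_card_inter A C
    omega
  have hCA : (C \ A).card = 5 - m := by
    have := Finset.card_sdiff_add_card_inter C A
    rw [Finset.inter_comm] at this
    omega
  have hAC : (A \ C).card = 5 - m := by
    have := Finset.card_sdiff_add_card_inter A C
    omega
  have hsub : (A.powersetCard 3 ×ˢ Aᶜ).filter (fun p => (insert p.2 p.1 ∩ C).card = 3) ⊆
      ((A ∩ C).powersetCard 3 ×ˢ (A ∪ C)ᶜ) ∪
      (((A.powersetCard 3).filter (fun T => (T ∩ C).card = 2)) ×ˢ (C \ A)) := by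
    intro p hp
    simp only [mem_filter, mem_product, mem_powersetCard, mem_compl] at hp
    obtain ⟨⟨⟨hTA, hT3⟩, hxA⟩, hcard⟩ := hp
    have hxT : p.2 ∉ p.1 := fun h => hxA (hTA h)
    rw [insert_inter_card' _ _ _ hxT] at hcard
    by_cases hxC : p.2 ∈ C
    · rw [if_pos hxC] at hcard
      simp only [mem_union, mem_product, mem_filter, mem_powersetCard, mem_sdiff, mem_compl]
      right
      exact ⟨⟨⟨hTA, hT3⟩, by omega⟩, hxC, hxA⟩
    · rw [if_neg hxC] at hcard
      simp only [add_zero] at hcard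
      have hTCle : (p.1 ∩ C).card ≤ p.1.card := card_le_card inter_subset_left
      have hTC : p.1 ⊆ C := by
        have he : p.1 ∩ C = p.1 := eq_of_subset_of_card_le inter_subset_left (by omega)
        conv_lhs => rw [← he]
        exact inter_subset_right
    
      simp only [mem_union, mem_product, mem_powersetCard, mem_compl, Finset.mem_union,
        mem_filter, mem_sdiff]
      left
      refine ⟨⟨subset_inter hTA hTC, hT3⟩, ?_⟩
      intro hmem
      rcases hmem with h | h
      · exact hxA h
      · exact hxC h
  have hY : ((A.powersetCard 3).filter (fun T => (T ∩ C).card = 2)).card ≤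
      m.choose 2 * (5 - m) := by
    have key := Finset.card_le_card_of_injOn (fun T => (T ∩ C, T \ C))
      (s := (A.powersetCard 3).filter (fun T => (T ∩ C).card = 2))
      (t := (A ∩ C).powersetCard 2 ×ˢ (A \ C).powersetCard 1)
      (by
        intro T hT
        simp only [mem_coe, mem_filter, mem_powersetCard] at hT
        obtain ⟨⟨hTA, hT3⟩, hT2⟩ := hT
        simp only [mem_coe, mem_product, mem_powersetCard]
        have hsd : (T \ C).card = 1 := by
          have := Finset.card_sdiff_add_card_inter T C
          omega
        exact ⟨⟨inter_subset_inter hTA (Finset.Subset.refl C), hT2⟩,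
          Finset.sdiff_subset_sdiff hTA (Finset.Subset.refl C), hsd⟩)
      (by
        intro T hT T' hT' hEq
        have h1 : T ∩ C = T' ∩ C := congrArg Prod.fst hEq
        have h2 : T \ C = T' \ C := congrArg Prod.snd hEq
        calc T = (T ∩ C) ∪ (T \ C) := (sup_inf_sdiff T C).symm
        _ = (T' ∩ C) ∪ (T' \ C) := by rw [h1, h2]
        _ = T' := sup_inf_sdiff T' C)
    calc ((A.powersetCard 3).filter (fun T => (T ∩ C).card = 2)).card
        ≤ ((A ∩ C).powersetCard 2 ×ˢ (A \ C).powersetCard 1).card := key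
      _ = m.choose 2 * (5 - m) := by
          rw [card_product, card_powersetCard, card_powersetCard, hAC, ← hm,
            Nat.choose_one_right]
  have hX : (((A ∩ C).powersetCard 3 ×ˢ (A ∪ C)ᶜ)).card = m.choose 3 * (3 + m) := by
    rw [card_product, card_powersetCard, card_compl, Fintype.card_fin, hunion, ← hm]
    congr 1
    omega
  have hbound : (((A ∩ C).powersetCard 3 ×ˢ (A ∪ C)ᶜ) ∪
      (((A.powersetCard 3).filter (fun T => (T ∩ C).card = 2)) ×ˢ (C \ A))).card ≤
      m.choose 3 * (3 + m) + m.choose 2 * (5 - m) * (5 - m) := by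
    refine le_trans (card_union_le _ _) ?_
    rw [hX]
    gcongr
    rw [card_product, hCA]
    exact Nat.mul_le_mul_right _ hY
  have hfin : m.choose 3 * (3 + m) + m.choose 2 * (5 - m) * (5 - m) ≤ 34 := by
    interval_cases m <;> simp [Nat.choose]
  exact le_trans (le_trans (card_le_card hsub) hbound) hfin

theorem example_13 (B : Fin 3 → Finset (Fin 13)) (hB : ∀ j, (B j).card = 5)
    (hinj : Function.Injective B) :
    6 ≤ (Finset.univ.filter (fun D : Finset (Fin 13) =>
      D.card = 4 ∧ (D ∩ B 0).card = 3 ∧ ∀ j ≠ 0, (D ∩ B j).card ≠ 3)).card := by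
  have hA : (B 0).card = 5 := hB 0
  have h1 : B 0 ≠ B 1 := fun h => by simpa using hinj h
  have h2 : B 0 ≠ B 2 := fun h => by simpa using hinj h
  set S := (B 0).powersetCard 3 ×ˢ (B 0)ᶜ with hSdef
  set Sg := S.filter (fun p => (insert p.2 p.1 ∩ B 1).card ≠ 3 ∧
    (insert p.2 p.1 ∩ B 2).card ≠ 3) with hSgdef
  have hS80 : S.card = 80 := by
    rw [hSdef, card_product, card_powersetCard, hA, card_compl, Fintype.card_fin, hA]
    decide
  have hcover : S ⊆ Sg ∪ (S.filter (fun p => (insert p.2 p.1 ∩ B 1).card = 3) ∪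
      S.filter (fun p => (insert p.2 p.1 ∩ B 2).card = 3)) := by
    intro p hp
    simp only [hSgdef, mem_union, mem_filter]
    by_cases hb1 : (insert p.2 p.1 ∩ B 1).card = 3
    · tauto
    by_cases hb2 : (insert p.2 p.1 ∩ B 2).card = 3 <;> tauto
  have hbad1 := bad_le' (B 0) (B 1) hA (hB 1) h1
  have hbad2 := bad_le' (B 0) (B 2) hA (hB 2) h2
  have hSg : 12 ≤ Sg.card := by
    have hc := card_le_card hcover
    have hu1 := card_union_le Sg ((S.filter (fun p => (insert p.2 p.1 ∩ B 1).card = 3)) ∪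
      S.filter (fun p => (insert p.2 p.1 ∩ B 2).card = 3))
    have hu2 := card_union_le (S.filter (fun p => (insert p.2 p.1 ∩ B 1).card = 3))
      (S.filter (fun p => (insert p.2 p.1 ∩ B 2).card = 3))
    rw [← hSdef] at hbad1 hbad2
    omega
  refine le_trans (by omega : (6:ℕ) ≤ 12) (le_trans hSg ?_)
  refine Finset.card_le_card_of_injOn (fun p => insert p.2 p.1) ?_ ?_
  · intro p hp
    obtain ⟨hpS, hn1, hn2⟩ := Finset.mem_filter.mp hp
    obtain ⟨hpT, hpx⟩ := Finset.mem_product.mp hpS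
    obtain ⟨hTA, hT3⟩ := Finset.mem_powersetCard.mp hpT
    have hxA : p.2 ∉ B 0 := Finset.mem_compl.mp hpx
    have hxT : p.2 ∉ p.1 := fun h => hxA (hTA h)
    simp only [mem_coe, mem_filter, mem_univ, true_and]
    refine ⟨by rw [card_insert_of_notMem hxT, hT3], ?_, ?_⟩
    · rw [Finset.insert_inter_of_notMem hxA, Finset.inter_eq_left.mpr hTA, hT3]
    · intro j hj
      fin_cases j
      · exact absurd rfl hj
      · exact hn1
      · exact hn2
  · intro p hp q hq h
    replace h : insert p.2 p.1 = insert q.2 q.1 := h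
    obtain ⟨hpS, -⟩ := Finset.mem_filter.mp hp
    obtain ⟨hpT, hpx⟩ := Finset.mem_product.mp hpS
    obtain ⟨hTA, -⟩ := Finset.mem_powersetCard.mp hpT
    have hxA : p.2 ∉ B 0 := Finset.mem_compl.mp hpx
    obtain ⟨hqS, -⟩ := Finset.mem_filter.mp hq
    obtain ⟨hqT, hqx⟩ := Finset.mem_product.mp hqS
    obtain ⟨hTA', -⟩ := Finset.mem_powersetCard.mp hqT
    have hxA' : q.2 ∉ B 0 := Finset.mem_compl.mp hqx
    have hT : p.1 = q.1 := by
      have e1 : insert p.2 p.1 ∩ B 0 = p.1 := by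
        rw [Finset.insert_inter_of_notMem hxA, Finset.inter_eq_left.mpr hTA]
      have e2 : insert q.2 q.1 ∩ B 0 = q.1 := by
        rw [Finset.insert_inter_of_notMem hxA', Finset.inter_eq_left.mpr hTA']
      rw [← e1, ← e2, h]
    have hx : p.2 = q.2 := by
      have hmem : p.2 ∈ insert q.2 q.1 := h ▸ Finset.mem_insert_self _ _
      rcases Finset.mem_insert.mp hmem with h' | h'
      · exact h'
      · exact absurd (hTA' h') hxA
    exact Prod.ext hT hx
end

section
/- The matrix M(4,5,13) (containment matrix: rows indexed by 4-subsets, columns by 5-subsets of [13], entry 1 iff A ⊆ B) is 2^2-disjunct: for any 3 distinct 5-subsets B₀, B₁, B₂ of [13], the number of 4-subsets D with D ⊆ B₀ and D ⊄ B₁, D ⊄ B₂ is at least 3. -/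
theorem example_13_macula (B : Fin 3 → Finset (Fin 13)) (hB : ∀ j, (B j).card = 5)
    (hinj : Function.Injective B) :
    3 ≤ (Finset.univ.filter (fun D : Finset (Fin 13) =>
      D.card = 4 ∧ D ⊆ B 0 ∧ ∀ j ≠ 0, ¬ D ⊆ B j)).card := by
  classical
  set T := (B 0).powersetCard 4 with hT
  have hTcard : T.card = 5 := by
    rw [hT, Finset.card_powersetCard, hB]; rfl
  have hbad : ∀ j : Fin 3, j ≠ 0 → (T.filter (fun D => D ⊆ B j)).card ≤ 1 := by
    intro j hj
    rw [Finset.card_le_one]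
    intro a ha b hb
    simp only [Finset.mem_filter, hT, Finset.mem_powersetCard] at ha hb
    have hint : (B 0 ∩ B j).card ≤ 4 := by
      by_contra h
      push_neg at h
      have h5 : (B 0).card ≤ (B 0 ∩ B j).card := by rw [hB]; omega
      have := Finset.eq_of_subset_of_card_le Finset.inter_subset_left h5
      have hsub : B 0 ⊆ B j := by
        intro x hx; rw [← this] at hx; exact (Finset.mem_inter.mp hx).2
      have : B 0 = B j := Finset.eq_of_subset_of_card_le hsub (by rw [hB, hB])
      exact hj (hinj this).symm
    have ha' : a = B 0 ∩ B j :=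
      Finset.eq_of_subset_of_card_le (Finset.subset_inter ha.1.1 ha.2)
        (by rw [ha.1.2]; exact hint)
    have hb' : b = B 0 ∩ B j :=
      Finset.eq_of_subset_of_card_le (Finset.subset_inter hb.1.1 hb.2)
        (by rw [hb.1.2]; exact hint)
    rw [ha', hb']
  have hkey : Finset.univ.filter (fun D : Finset (Fin 13) =>
      D.card = 4 ∧ D ⊆ B 0 ∧ ∀ j ≠ 0, ¬ D ⊆ B j)
      = T.filter (fun D => ∀ j ≠ 0, ¬ D ⊆ B j) := by
    ext D
    simp only [Finset.mem_filter, Finset.mem_univ, true_and, hT,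
      Finset.mem_powersetCard]
    tauto
  rw [hkey]
  have hsplit := Finset.card_filter_add_card_filter_not
    (s := T) (p := fun D => ∀ j ≠ 0, ¬ D ⊆ B j)
  have hneg : T.filter (fun D => ¬ ∀ j ≠ 0, ¬ D ⊆ B j)
      ⊆ T.filter (fun D => D ⊆ B 1) ∪ T.filter (fun D => D ⊆ B 2) := by
    intro D hD
    simp only [Finset.mem_filter] at hD
    obtain ⟨hDT, hD⟩ := hD
    push_neg at hD
    obtain ⟨j, hj, hsub⟩ := hD
    fin_cases j
    · exact absurd rfl hj
    · exact Finset.mem_union_left _ (Finset.mem_filter.mpr ⟨hDT, hsub⟩)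
    · exact Finset.mem_union_right _ (Finset.mem_filter.mpr ⟨hDT, hsub⟩)
  have h2 : (T.filter (fun D => ¬ ∀ j ≠ 0, ¬ D ⊆ B j)).card ≤ 2 := by
    calc _ ≤ (T.filter (fun D => D ⊆ B 1) ∪ T.filter (fun D => D ⊆ B 2)).card :=
          Finset.card_le_card hneg
      _ ≤ (T.filter (fun D => D ⊆ B 1)).card + (T.filter (fun D => D ⊆ B 2)).card :=
          Finset.card_union_le _ _
      _ ≤ 2 := by
          have h1 := hbad 1 (by decide)
          have h2 := hbad 2 (by decide)
          omega
  omega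
end

section
/- Let A₀ be an i-subset of a k-subset B₀ of [n], and let B₁,...,B_s be k-subsets with |A₀ ∩ B_j| < i for all j. Suppose n - k - s(k+d-2i) ≥ d - i and ⌊(d+1)/2⌋ ≤ i ≤ d, and |B₀ ∩ B_j| ≥ 2i - d for all j ∈ [s]. Then the number of d-subsets D of [n] with A₀ ⊆ D, D ∩ B₀ = A₀, and D disjoint from B₁ ∪ ... ∪ B_s outside A₀ (i.e., D \ A₀ ⊆ [n] \ (B₀ ∪ B₁ ∪ ... ∪ B_s)) is at least C(n - k - s(k+d-2i), d-i); and every such D satisfies |D ∩ B₀| = i and |D ∩ B_j| ≠ i for all j ∈ [s]. -/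
theorem extension_count (n d k i s : ℕ) (A₀ B₀ : Finset (Fin n))
    (hA₀B₀ : A₀ ⊆ B₀) (hA₀ : A₀.card = i) (hB₀ : B₀.card = k)
    (B : Fin s → Finset (Fin n)) (hBk : ∀ j, (B j).card = k)
    (hmeetA : ∀ j, (A₀ ∩ B j).card < i)
    (hn : k + s * (k + d - 2 * i) + (d - i) ≤ n)
    (hi : (d + 1) / 2 ≤ i) (hid : i ≤ d)
    (hmeetB : ∀ j, (2 * i : ℤ) - d ≤ ((B₀ ∩ B j).card : ℤ)) :
    Nat.choose (n - k - s * (k + d - 2 * i)) (d - i) ≤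
      (Finset.univ.filter (fun D : Finset (Fin n) =>
        D.card = d ∧ A₀ ⊆ D ∧ D ∩ B₀ = A₀ ∧
          D \ A₀ ⊆ (B₀ ∪ Finset.univ.biUnion B)ᶜ)).card ∧
    ∀ D : Finset (Fin n),
      D.card = d → A₀ ⊆ D → D ∩ B₀ = A₀ →
        D \ A₀ ⊆ (B₀ ∪ Finset.univ.biUnion B)ᶜ →
        (D ∩ B₀).card = i ∧ ∀ j, (D ∩ B j).card ≠ i := by
  set U : Finset (Fin n) := B₀ ∪ Finset.univ.biUnion B with hUdef
  constructor
  · -- counting part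
    have hUcard : U.card ≤ k + s * (k + d - 2 * i) := by
      have h1 : U.card ≤ B₀.card + ((Finset.univ.biUnion B) \ B₀).card := by
        rw [hUdef, ← Finset.union_sdiff_self_eq_union]
        exact Finset.card_union_le _ _
      have h2 : (Finset.univ.biUnion B) \ B₀ =
          Finset.univ.biUnion (fun j => B j \ B₀) := by
        ext x; simp [Finset.mem_sdiff, Finset.mem_biUnion]
      have h3 : ∀ j, (B j \ B₀).card ≤ k + d - 2 * i := by
        intro j
        have hcj := Finset.card_sdiff_add_card_inter (B j) B₀
        have hI := hmeetB j
        rw [Finset.inter_comm] at hI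
        have hik : i ≤ k := hA₀ ▸ hB₀ ▸ Finset.card_le_card hA₀B₀
        have := hBk j
        omega
      have h4 : ((Finset.univ.biUnion B) \ B₀).card ≤ s * (k + d - 2 * i) := by
        rw [h2]
        calc (Finset.univ.biUnion (fun j => B j \ B₀)).card
            ≤ ∑ j : Fin s, (B j \ B₀).card := Finset.card_biUnion_le
          _ ≤ ∑ _j : Fin s, (k + d - 2 * i) := Finset.sum_le_sum (fun j _ => h3 j)
          _ = s * (k + d - 2 * i) := by simp [Finset.sum_const, Finset.card_univ]
      omega
    have hScard : n - k - s * (k + d - 2 * i) ≤ Uᶜ.card := by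
      have : Uᶜ.card = n - U.card := by
        rw [Finset.card_compl, Fintype.card_fin]
      omega
    have hdisj : Disjoint A₀ Uᶜ :=
      disjoint_compl_right.mono_left (hA₀B₀.trans Finset.subset_union_left)
    calc Nat.choose (n - k - s * (k + d - 2 * i)) (d - i)
        ≤ Nat.choose Uᶜ.card (d - i) := Nat.choose_le_choose _ hScard
      _ = (Finset.powersetCard (d - i) Uᶜ).card := (Finset.card_powersetCard _ _).symm
      _ ≤ _ := by
          apply Finset.card_le_card_of_injOn (fun E => A₀ ∪ E)
          · intro E hE
            rw [Finset.mem_coe, Finset.mem_powersetCard] at hE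
            obtain ⟨hEsub, hEcard⟩ := hE
            have hdE : Disjoint A₀ E := hdisj.mono_right hEsub
            rw [Finset.mem_coe, Finset.mem_filter]
            refine ⟨Finset.mem_univ _, ?_, Finset.subset_union_left, ?_, ?_⟩
            · rw [Finset.card_union_of_disjoint hdE, hA₀, hEcard]; omega
            · have hEB₀ : E ∩ B₀ = ∅ := by
                apply Finset.eq_empty_of_forall_notMem
                intro x hx
                rw [Finset.mem_inter] at hx
                have := hEsub hx.1
                rw [Finset.mem_compl] at this
                exact this (Finset.mem_union_left _ hx.2)
              rw [Finset.union_inter_distrib_right, hEB₀,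
                Finset.inter_eq_left.mpr hA₀B₀, Finset.union_empty]
            · intro x hx
              rw [Finset.mem_sdiff, Finset.mem_union] at hx
              exact hEsub (hx.1.resolve_left hx.2)
          · intro E₁ h₁ E₂ h₂ heq
            rw [Finset.mem_coe, Finset.mem_powersetCard] at h₁ h₂
            have e₁ : (A₀ ∪ E₁) \ A₀ = E₁ := by
              rw [Finset.union_sdiff_cancel_left (hdisj.mono_right h₁.1)]
            have e₂ : (A₀ ∪ E₂) \ A₀ = E₂ := by
              rw [Finset.union_sdiff_cancel_left (hdisj.mono_right h₂.1)]
            rw [← e₁, ← e₂]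
            simp only at heq
            rw [heq]
  · intro D hD hAD hDB₀ hcompl
    refine ⟨by rw [hDB₀, hA₀], fun j => ?_⟩
    have : D ∩ B j = A₀ ∩ B j := by
      ext x
      simp only [Finset.mem_inter]
      constructor
      · rintro ⟨hxD, hxB⟩
        refine ⟨?_, hxB⟩
        by_contra hxA
        have := hcompl (Finset.mem_sdiff.mpr ⟨hxD, hxA⟩)
        rw [Finset.mem_compl] at this
        exact this (Finset.mem_union_right _ (Finset.mem_biUnion.mpr
          ⟨j, Finset.mem_univ _, hxB⟩))
      · rintro ⟨hxA, hxB⟩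
        exact ⟨hAD hxA, hxB⟩
    rw [this]
    exact Nat.ne_of_lt (hmeetA j)
end
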